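/- In the distance-fraud model, the success probabilities Pr(D_i) satisfy, for all 1 ≤ i ≤ n: Pr(D_i) = (1/4)·Pr(D_{i−1}) + (1/2)^i + (1/8)·Σ_{j=1}^{i−1} Pr(D_{j−1})·(1/2)^{i−j}, with Pr(D_0) = 1. In particular Pr(D_1) = 3/4 and Pr(D_2) = 1/2. -/

import Mathlib

/-!  The distance-fraud model of the paper.  Bits are elements of `ZMod 2`
(XOR is `+`, AND is `*`).  A sample point consists of the uniformly
distributed, mutually independent `n`-bit strings `Q, R⁰, R¹, c, c̃`
(key register, answer registers, verifier's challenges, malicious prover's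
random challenge guesses). -/

/-- Sample space: `(Q, R⁰, R¹, c, c̃)`. -/
abbrev DistΩ (n : ℕ) :=
  (Fin n → ZMod 2) × (Fin n → ZMod 2) × (Fin n → ZMod 2) ×
  (Fin n → ZMod 2) × (Fin n → ZMod 2)

namespace Dist

variable {n : ℕ}

def keyQ (ω : DistΩ n) : Fin n → ZMod 2 := ω.1
def reg0 (ω : DistΩ n) : Fin n → ZMod 2 := ω.2.1
def reg1 (ω : DistΩ n) : Fin n → ZMod 2 := ω.2.2.1
/-- `c`, the verifier's challenges. -/
def cVer (ω : DistΩ n) : Fin n → ZMod 2 := ω.2.2.2.1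
/-- `c̃`, the malicious prover's random challenge guesses. -/
def cGuess (ω : DistΩ n) : Fin n → ZMod 2 := ω.2.2.2.2

/-- `f_Q` applied to the length-`i` prefix of the challenge string `c`. -/
def fQ (Q c : Fin n → ZMod 2) (i : ℕ) : ZMod 2 :=
  ∑ j : Fin n, if (j : ℕ) < i then c j * Q j else 0

/-- `R_j^{b}`: the register bit selected by the bit `b` at round `j+1`. -/
def reg (ω : DistΩ n) (b : ZMod 2) (j : Fin n) : ZMod 2 :=
  if b = 0 then reg0 ω j else reg1 ω j

/-- The malicious prover's early reply at round `j+1`: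
`a = R_j^{c̃_j} ⊕ f_Q(C̃_j)`. -/
def ans (ω : DistΩ n) (j : Fin n) : ZMod 2 :=
  reg ω (cGuess ω j) j + fQ (keyQ ω) (cGuess ω) ((j : ℕ) + 1)

/-- The correct answer expected by the verifier at round `j+1`. -/
def corr (ω : DistΩ n) (j : Fin n) : ZMod 2 :=
  reg ω (cVer ω j) j + fQ (keyQ ω) (cVer ω) ((j : ℕ) + 1)

/-- `D_i`: the malicious prover wins the first `i` rounds (`D_0` is the sure
event). -/
def D (i : ℕ) (ω : DistΩ n) : Prop :=
  ∀ j : Fin n, (j : ℕ) < i → ans ω j = corr ω j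

/-- `F_i`: the running guess of `f_Q(C_i)` is correct (`F_0` is the sure
event). -/
def F (i : ℕ) (ω : DistΩ n) : Prop :=
  fQ (keyQ ω) (cGuess ω) i = fQ (keyQ ω) (cVer ω) i

open Classical in
/-- Probability of an event under the uniform distribution on `DistΩ n`. -/
noncomputable def pr (n : ℕ) (E : DistΩ n → Prop) : ℚ :=
  ((Finset.univ.filter E).card : ℚ) / ((Finset.univ : Finset (DistΩ n)).card : ℚ)

/-- Conditional probability `Pr(A | B)`. -/
noncomputable def cpr (n : ℕ) (A B : DistΩ n → Prop) : ℚ :=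
  pr n (fun ω => A ω ∧ B ω) / pr n B

end Dist

/-!
Write `Δ_i = f_Q(C̃_i) ⊕ f_Q(C_i)` for the error of the prover's running guess, so that
`F_i = {Δ_i = 0}`. Unfolding the answers, the prover wins round `k + 1` iff `Δ_k` equals a bit
computed from the round-`(k+1)` bits `(q, r⁰, r¹, c, c̃)` alone, and
`Δ_{k+1} = Δ_k ⊕ (c̃ ⊕ c) q`. Those five bits are uniform and independent of the first `k`
rounds, so `(D_k, Δ_k)` evolves as a Markov chain whose transition probabilities are read off
the 32 bit patterns. With `p_k = Pr(D_k ∧ F_k)` this gives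
`Pr(D_{k+1}) = Pr(D_k)/4 + p_k/2` and `p_{k+1} = p_k/2 + Pr(D_k)/8`, and eliminating `p_k`
(solving its recurrence from `p_0 = 1`) yields the stated recursion.
-/

open Finset

-- `(p, u)` is a lawful lens: `Ω ≃ Ω' × V` with `p` the projection to `V` and `u` replacing it.
theorem card_filter_and_comp_mul_card {Ω V : Type*} [Fintype Ω] [Fintype V]
    (p : Ω → V) (u : Ω → V → Ω) (hpu : ∀ ω v, p (u ω v) = v) (hup : ∀ ω, u ω (p ω) = ω)
    (huu : ∀ ω v w, u (u ω v) w = u ω w) (E : Ω → Prop) [DecidablePred E]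
    (hE : ∀ ω v, E (u ω v) ↔ E ω) (S : V → Prop) [DecidablePred S] :
    #{ω | E ω ∧ S (p ω)} * Fintype.card V = #{ω | E ω} * #{v | S v} := by
  rw [← card_univ, ← card_product, ← card_product]
  refine card_nbij' (fun x => (u x.1 x.2, p x.1)) (fun y => (u y.1 y.2, p y.1)) ?_ ?_ ?_ ?_ <;>
    rintro ⟨ω, v⟩ h <;> simp_all

theorem Fin.sum_ite_lt_succ {M : Type*} [AddCommMonoid M] {n : ℕ} (g : Fin n → M) (k : Fin n) :
    (∑ j : Fin n, if (j : ℕ) < k + 1 then g j else 0)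
      = (∑ j : Fin n, if (j : ℕ) < k then g j else 0) + g k := by
  rw [show g k = ∑ j, if j = k then g j else 0 by simp, ← sum_add_distrib]
  refine sum_congr rfl fun j _ => ?_
  rcases lt_trichotomy (j : ℕ) k with h | h | h
  · simp [h, h.trans (Nat.lt_succ_self _), Fin.ne_of_lt h]
  · simp [Fin.ext h]
  · simp [show ¬ (j : ℕ) < k + 1 by omega, Nat.not_lt_of_gt h, (Fin.ne_of_lt h).symm]

theorem ZMod.sum_univ_two {M : Type*} [AddCommMonoid M] (f : ZMod 2 → M) : ∑ x, f x = f 0 + f 1 :=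
  Fin.sum_univ_two f

theorem sum_Icc_mul_half_pow_succ (d : ℕ → ℚ) (m : ℕ) :
    ∑ j ∈ Icc 1 m, d j * (1 / 2) ^ (m + 1 - j)
      = (1 / 2) * ∑ j ∈ Icc 1 m, d j * (1 / 2) ^ (m - j) := by
  rw [mul_sum]
  refine sum_congr rfl fun j hj => ?_
  rw [show m + 1 - j = m - j + 1 by have := (mem_Icc.mp hj).2; omega, pow_succ]
  ring

theorem recursion_of_coupled_recurrences {N : ℕ} {d p : ℕ → ℚ} (hp₀ : p 0 = 1)
    (hd : ∀ i < N, d (i + 1) = d i / 4 + p i / 2) (hp : ∀ i < N, p (i + 1) = p i / 2 + d i / 8) :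
    ∀ i, 1 ≤ i → i ≤ N →
      d i = (1 / 4) * d (i - 1) + (1 / 2) ^ i
        + (1 / 8) * ∑ j ∈ Icc 1 (i - 1), d (j - 1) * (1 / 2) ^ (i - j) := by
  have closed : ∀ m ≤ N,
      p m = (1 / 2) ^ m + (1 / 8) * ∑ j ∈ Icc 1 m, d (j - 1) * (1 / 2) ^ (m - j) := by
    intro m hm
    induction m with
    | zero => simp [hp₀]
    | succ m ih =>
      rw [hp m hm, ih (by omega), sum_Icc_succ_top (by omega), sum_Icc_mul_half_pow_succ]
      simp only [Nat.add_sub_cancel, Nat.sub_self, pow_zero, pow_succ]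
      ring
  intro i hi₁ hiN
  obtain ⟨m, rfl⟩ : ∃ m, i = m + 1 := ⟨i - 1, by omega⟩
  rw [hd m hiN, closed m (by omega), Nat.add_sub_cancel, sum_Icc_mul_half_pow_succ]
  ring

namespace Dist

variable {n : ℕ}

theorem pr_eq_sum_fiberwise {β : Type*} [Fintype β] (g : DistΩ n → β) (E : DistΩ n → Prop) :
    pr n E = ∑ x, pr n (fun ω => E ω ∧ g ω = x) := by
  classical
  simp only [pr, ← sum_div]
  rw [card_eq_sum_card_fiberwise (f := g) (t := univ) (fun _ _ => mem_univ _)]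
  push_cast
  simp only [filter_filter]
  congr!

abbrev RoundBits := ZMod 2 × ZMod 2 × ZMod 2 × ZMod 2 × ZMod 2

def roundBits (k : Fin n) (ω : DistΩ n) : RoundBits :=
  (keyQ ω k, reg0 ω k, reg1 ω k, cVer ω k, cGuess ω k)

def setRound (ω : DistΩ n) (k : Fin n) (v : RoundBits) : DistΩ n :=
  (Function.update ω.1 k v.1, Function.update ω.2.1 k v.2.1, Function.update ω.2.2.1 k v.2.2.1,
    Function.update ω.2.2.2.1 k v.2.2.2.1, Function.update ω.2.2.2.2 k v.2.2.2.2)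

@[simp]
theorem roundBits_setRound (ω : DistΩ n) (k : Fin n) (v : RoundBits) :
    roundBits k (setRound ω k v) = v := by
  simp [roundBits, setRound, keyQ, reg0, reg1, cVer, cGuess]

theorem roundBits_setRound_of_ne (ω : DistΩ n) {j k : Fin n} (h : j ≠ k) (v : RoundBits) :
    roundBits j (setRound ω k v) = roundBits j ω := by
  simp [roundBits, setRound, keyQ, reg0, reg1, cVer, cGuess, h]

@[simp]
theorem setRound_roundBits (ω : DistΩ n) (k : Fin n) : setRound ω k (roundBits k ω) = ω := by
  simp [roundBits, setRound, keyQ, reg0, reg1, cVer, cGuess]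

@[simp]
theorem setRound_setRound (ω : DistΩ n) (k : Fin n) (v w : RoundBits) :
    setRound (setRound ω k v) k w = setRound ω k w := by
  simp [setRound]

theorem pr_and_roundBits_eq_mul (k : Fin n) (E : DistΩ n → Prop)
    (hE : ∀ ω v, E (setRound ω k v) ↔ E ω) (S : RoundBits → Prop) [DecidablePred S] :
    pr n (fun ω => E ω ∧ S (roundBits k ω)) = pr n E * (#{v | S v} / 32) := by
  classical
  have h := card_filter_and_comp_mul_card (roundBits k) (setRound · k) (roundBits_setRound · k)
    (setRound_roundBits · k) (setRound_setRound · k) E hE S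
  rw [show Fintype.card RoundBits = 32 by simp] at h
  simp only [pr]
  have hΩ : (#(univ : Finset (DistΩ n)) : ℚ) ≠ 0 := by simp
  field_simp
  convert congrArg (Nat.cast (R := ℚ)) h using 1 <;> push_cast <;> congr!

def flipBit : RoundBits → ZMod 2
  | (q, _, _, c, c') => (c' + c) * q

def winBit : RoundBits → ZMod 2
  | (q, r₀, r₁, c, c') => (if c' = 0 then r₀ else r₁) + (if c = 0 then r₀ else r₁) + (c' + c) * q

def guessError (i : ℕ) (ω : DistΩ n) : ZMod 2 :=
  fQ (keyQ ω) (cGuess ω) i + fQ (keyQ ω) (cVer ω) i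

theorem guessError_eq_sum (i : ℕ) (ω : DistΩ n) :
    guessError i ω = ∑ j : Fin n, if (j : ℕ) < i then flipBit (roundBits j ω) else 0 := by
  rw [guessError, fQ, fQ, ← sum_add_distrib]
  refine sum_congr rfl fun j _ => ?_
  split_ifs <;> simp [flipBit, roundBits, add_mul]

theorem guessError_zero (ω : DistΩ n) : guessError 0 ω = 0 := by
  simp [guessError_eq_sum]

theorem guessError_succ (k : Fin n) (ω : DistΩ n) :
    guessError (k + 1) ω = guessError k ω + flipBit (roundBits k ω) := by
  simp only [guessError_eq_sum, Fin.sum_ite_lt_succ]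

theorem guessError_setRound {i : ℕ} {k : Fin n} (hik : i ≤ k) (ω : DistΩ n) (v : RoundBits) :
    guessError i (setRound ω k v) = guessError i ω := by
  simp only [guessError_eq_sum]
  refine sum_congr rfl fun j _ => ?_
  split_ifs with hj
  · rw [roundBits_setRound_of_ne ω (Fin.ne_of_lt (by omega))]
  · rfl

theorem ans_eq_corr_iff (k : Fin n) (ω : DistΩ n) :
    ans ω k = corr ω k ↔ guessError k ω = winBit (roundBits k ω) := by
  have key : ∀ a b x y s t : ZMod 2, a + (x + s) = b + (y + t) ↔ x + y = a + b + (s + t) := by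
    decide
  simp only [ans, corr, reg, fQ, Fin.sum_ite_lt_succ, key, guessError, winBit, roundBits, add_mul]
  rfl

theorem D_iff_forall (i : ℕ) (ω : DistΩ n) :
    D i ω ↔ ∀ j : Fin n, (j : ℕ) < i → guessError j ω = winBit (roundBits j ω) := by
  simp only [D, ans_eq_corr_iff]

theorem D_setRound {i : ℕ} {k : Fin n} (hik : i ≤ k) (ω : DistΩ n) (v : RoundBits) :
    D i (setRound ω k v) ↔ D i ω := by
  simp only [D_iff_forall]
  refine forall₂_congr fun j hj => ?_
  rw [guessError_setRound (by omega), roundBits_setRound_of_ne ω (Fin.ne_of_lt (by omega))]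

theorem D_succ (k : Fin n) (ω : DistΩ n) :
    D (k + 1) ω ↔ D k ω ∧ guessError k ω = winBit (roundBits k ω) := by
  simp only [D_iff_forall, Nat.lt_succ_iff_lt_or_eq, or_imp, forall_and, Fin.val_inj,
    forall_eq]

theorem D_succ_and_guessError_iff (k : Fin n) (e x : ZMod 2) (ω : DistΩ n) :
    (D (k + 1) ω ∧ guessError (k + 1) ω = e) ∧ guessError k ω = x ↔
      (D k ω ∧ guessError k ω = x) ∧
        (winBit (roundBits k ω) = x ∧ x + flipBit (roundBits k ω) = e) := by
  rw [D_succ, guessError_succ]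
  constructor
  · rintro ⟨⟨⟨hD, hwin⟩, rfl⟩, rfl⟩
    exact ⟨⟨hD, rfl⟩, hwin.symm, rfl⟩
  · rintro ⟨⟨hD, rfl⟩, hwin, rfl⟩
    exact ⟨⟨⟨hD, hwin.symm⟩, rfl⟩, rfl⟩

theorem pr_D_succ_and_guessError (k : Fin n) (e : ZMod 2) :
    pr n (fun ω => D (k + 1) ω ∧ guessError (k + 1) ω = e)
      = ∑ x, pr n (fun ω => D k ω ∧ guessError k ω = x)
          * (#{v | winBit v = x ∧ x + flipBit v = e} / 32) := by
  rw [pr_eq_sum_fiberwise (guessError k)]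
  refine sum_congr rfl fun x _ => ?_
  simp only [D_succ_and_guessError_iff]
  exact pr_and_roundBits_eq_mul k (fun ω => D k ω ∧ guessError k ω = x)
    (fun ω v => by simp only [D_setRound le_rfl, guessError_setRound le_rfl])
    (fun v => winBit v = x ∧ x + flipBit v = e)

theorem pr_D_eq_add (i : ℕ) :
    pr n (D i) = pr n (fun ω => D i ω ∧ guessError i ω = 0)
      + pr n (fun ω => D i ω ∧ guessError i ω = 1) := by
  rw [pr_eq_sum_fiberwise (guessError i), ZMod.sum_univ_two]

theorem pr_D_succ_and_guessError_zero (k : Fin n) :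
    pr n (fun ω => D (k + 1) ω ∧ guessError (k + 1) ω = 0)
      = pr n (fun ω => D k ω ∧ guessError k ω = 0) / 2 + pr n (D k) / 8 := by
  have h₀ : #{v | winBit v = 0 ∧ 0 + flipBit v = 0} = 20 := by decide
  have h₁ : #{v | winBit v = 1 ∧ 1 + flipBit v = 0} = 4 := by decide
  rw [pr_D_succ_and_guessError, ZMod.sum_univ_two, h₀, h₁, pr_D_eq_add]
  ring

theorem pr_D_succ (k : Fin n) :
    pr n (D (k + 1)) = pr n (D k) / 4 + pr n (fun ω => D k ω ∧ guessError k ω = 0) / 2 := by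
  have h₀ : #{v | winBit v = 0 ∧ 0 + flipBit v = 1} = 4 := by decide
  have h₁ : #{v | winBit v = 1 ∧ 1 + flipBit v = 1} = 4 := by decide
  rw [pr_D_eq_add (k + 1), pr_D_succ_and_guessError_zero, pr_D_succ_and_guessError,
    ZMod.sum_univ_two, h₀, h₁, pr_D_eq_add]
  ring

theorem pr_D_zero_and_guessError_zero : pr n (fun ω => D 0 ω ∧ guessError 0 ω = 0) = 1 := by
  simp [D, guessError_zero, pr]

theorem pr_D_zero : pr n (D 0) = 1 := by
  simpa [guessError_zero] using pr_D_zero_and_guessError_zero (n := n)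

end Dist

open Dist in
/-- the recursion for the distance-fraud success probabilities
`Pr(D_i) = (1/4)·Pr(D_{i−1}) + (1/2)^i + (1/8)·Σ_{j=1}^{i−1} Pr(D_{j−1})·(1/2)^{i−j}`
with `Pr(D_0) = 1`; in particular `Pr(D_1) = 3/4` and `Pr(D_2) = 1/2`. -/
theorem distance_fraud_recursion (n : ℕ) :
    (∀ i, 1 ≤ i → i ≤ n →
      pr n (D i)
        = (1 / 4) * pr n (D (i - 1)) + (1 / 2) ^ i
          + (1 / 8) * ∑ j ∈ Finset.Icc 1 (i - 1),
              pr n (D (j - 1)) * (1 / 2) ^ (i - j)) ∧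
    pr n (D 0) = 1 ∧
    (1 ≤ n → pr n (D 1) = 3 / 4) ∧
    (2 ≤ n → pr n (D 2) = 1 / 2) := by
  have recursion := recursion_of_coupled_recurrences (N := n) (d := fun i => pr n (D i))
    (p := fun i => pr n (fun ω => D i ω ∧ guessError i ω = 0)) pr_D_zero_and_guessError_zero
    (fun i hi => pr_D_succ ⟨i, hi⟩) (fun i hi => pr_D_succ_and_guessError_zero ⟨i, hi⟩)
  have hD₁ (h : 1 ≤ n) : pr n (D 1) = 3 / 4 := by
    rw [recursion 1 le_rfl h]
    norm_num [pr_D_zero]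
  refine ⟨recursion, pr_D_zero, hD₁, fun h => ?_⟩
  rw [recursion 2 (by norm_num) h]
  norm_num [pr_D_zero, hD₁ (by omega)]
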